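/- arXiv:2107.04465 — 7 statements merged into one kernel-verified Lean document; each statement's English description precedes it below -/
import Mathlib

section
/- If f, f' : X → X' and g, g' : X → X' are continuous maps with f homotopic to g and f' homotopic to g', then the homotopic distance D(f,f') equals D(g,g'). -/
/-- The (higher) homotopic distance of a family of continuous maps `f i : X → Y`:
the least `l` such that `X` admits an open cover by `l` open sets on each of which
all the maps restrict to pairwise homotopic maps (`∞` if no such cover exists). -/
noncomputable def homDist {X Y : Type*} [TopologicalSpace X] [TopologicalSpace Y]
    {k : ℕ} (f : Fin k → C(X, Y)) : ℕ∞ :=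
  sInf ((fun n : ℕ => (n : ℕ∞)) '' {n : ℕ | ∃ U : Fin n → Set X,
    (∀ j, IsOpen (U j)) ∧ (⋃ j, U j) = Set.univ ∧
    ∀ j i i', ((f i).restrict (U j)).Homotopic ((f i').restrict (U j))})

/-- Homotopic distance of two maps. -/
noncomputable def homDist2 {X Y : Type*} [TopologicalSpace X] [TopologicalSpace Y]
    (f g : C(X, Y)) : ℕ∞ :=
  homDist ![f, g]

namespace ContinuousMap.Homotopic

variable {X Y : Type*} [TopologicalSpace X] [TopologicalSpace Y]

theorem restrict {f g : C(X, Y)} (h : f.Homotopic g) (U : Set X) :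
    (f.restrict U).Homotopic (g.restrict U) :=
  h.comp (.refl ((ContinuousMap.id X).restrict U))

end ContinuousMap.Homotopic

section homDist

variable {X Y : Type*} [TopologicalSpace X] [TopologicalSpace Y] {k : ℕ}

/-- Every cover admissible for `f` is admissible for `g`: on each piece,
`g i ≃ f i ≃ f i' ≃ g i'`. -/
theorem homDist_le_of_homotopic {f g : Fin k → C(X, Y)} (h : ∀ i, (f i).Homotopic (g i)) :
    homDist g ≤ homDist f := by
  refine sInf_le_sInf (Set.image_mono ?_)
  rintro n ⟨U, hopen, hcover, hhom⟩
  exact ⟨U, hopen, hcover, fun j i i' =>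
    (((h i).restrict (U j)).symm.trans (hhom j i i')).trans ((h i').restrict (U j))⟩

theorem homDist_congr_homotopic {f g : Fin k → C(X, Y)} (h : ∀ i, (f i).Homotopic (g i)) :
    homDist f = homDist g :=
  le_antisymm (homDist_le_of_homotopic fun i => (h i).symm) (homDist_le_of_homotopic h)

end homDist

theorem homDist2_congr_homotopic {X X' : Type*} [TopologicalSpace X] [TopologicalSpace X']
    (f f' g g' : C(X, X')) (hf : f.Homotopic g) (hf' : f'.Homotopic g') :
    homDist2 f f' = homDist2 g g' :=
  homDist_congr_homotopic <| Fin.forall_fin_two.mpr ⟨hf, hf'⟩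
end

section
/- For continuous maps f, f' : X → X' and any continuous map k : Z → X, the homotopic distance satisfies D(f ∘ k, f' ∘ k) ≤ D(f, f'). -/
section

variable {X Y Z : Type*} [TopologicalSpace X] [TopologicalSpace Y] [TopologicalSpace Z]

theorem ContinuousMap.Homotopic.restrict_comp_preimage {f g : C(X, Y)} {U : Set X}
    (h : (f.restrict U).Homotopic (g.restrict U)) (k : C(Z, X)) :
    ((f.comp k).restrict (k ⁻¹' U)).Homotopic ((g.comp k).restrict (k ⁻¹' U)) :=
  h.comp (.refl (k.restrictPreimage U))

theorem homDist_comp_right_le {n : ℕ} (f : Fin n → C(X, Y)) (k : C(Z, X)) :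
    homDist (fun i => (f i).comp k) ≤ homDist f := by
  refine sInf_le_sInf (Set.image_mono ?_)
  rintro m ⟨U, hopen, hcover, hhom⟩
  refine ⟨fun j => k ⁻¹' U j, fun j => (hopen j).preimage k.continuous, ?_,
    fun j i i' => (hhom j i i').restrict_comp_preimage k⟩
  rw [← Set.preimage_iUnion, hcover, Set.preimage_univ]

end

theorem homDist2_comp_right_le {X X' Z : Type*} [TopologicalSpace X] [TopologicalSpace X']
    [TopologicalSpace Z] (f f' : C(X, X')) (k : C(Z, X)) :
    homDist2 (f.comp k) (f'.comp k) ≤ homDist2 f f' := by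
  have hcomp : ![f.comp k, f'.comp k] = fun i => (![f, f'] i).comp k := by
    ext i : 1
    fin_cases i <;> rfl
  rw [homDist2, homDist2, hcomp]
  exact homDist_comp_right_le _ k
end

section
/- Let f, f' : X → X' be continuous maps and k : X' → Z a continuous map admitting a continuous left homotopy inverse k' : Z → X' (i.e. k' ∘ k ≃ 1_{X'}). Then D(k ∘ f, k ∘ f') = D(f, f'). -/
/-
Restricting to an open set commutes with post-composition by `k`, and post-composition by a map
with a left homotopy inverse reflects homotopy: from `k ∘ g₀ ≃ k ∘ g₁` we get
`g₀ ≃ k' ∘ k ∘ g₀ ≃ k' ∘ k ∘ g₁ ≃ g₁`. So the families `f` and `k ∘ f` admit exactly the same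
admissible covers, and their homotopic distances agree.
-/

namespace ContinuousMap.Homotopic

variable {X Y Z : Type*} [TopologicalSpace X] [TopologicalSpace Y] [TopologicalSpace Z]

theorem comp_left_iff_of_leftInverse {k : C(Y, Z)} {k' : C(Z, Y)}
    (h : (k'.comp k).Homotopic (ContinuousMap.id Y)) {g₀ g₁ : C(X, Y)} :
    (k.comp g₀).Homotopic (k.comp g₁) ↔ g₀.Homotopic g₁ := by
  have absorb : ∀ g : C(X, Y), (k'.comp (k.comp g)).Homotopic g := fun g =>
    h.comp (.refl g)
  refine ⟨fun hk => ?_, fun hg => (Homotopic.refl k).comp hg⟩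
  exact (absorb g₀).symm.trans (((Homotopic.refl k').comp hk).trans (absorb g₁))

end ContinuousMap.Homotopic

section HomotopicDistance

variable {X Y Z : Type*} [TopologicalSpace X] [TopologicalSpace Y] [TopologicalSpace Z]

theorem homDist_congr {n : ℕ} {f : Fin n → C(X, Y)} {g : Fin n → C(X, Z)}
    (hfg : ∀ (U : Set X) (i i' : Fin n), ((f i).restrict U).Homotopic ((f i').restrict U) ↔
      ((g i).restrict U).Homotopic ((g i').restrict U)) :
    homDist f = homDist g := by
  unfold homDist
  congr 2
  ext m
  refine exists_congr fun U => and_congr_right fun _ => and_congr_right fun _ => ?_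
  exact forall_congr' fun j => forall₂_congr fun i i' => hfg (U j) i i'

theorem homDist_comp_left_of_leftInverse {n : ℕ} (f : Fin n → C(X, Y)) {k : C(Y, Z)}
    {k' : C(Z, Y)} (h : (k'.comp k).Homotopic (ContinuousMap.id Y)) :
    homDist (fun i => k.comp (f i)) = homDist f :=
  homDist_congr fun U i i' =>
    ContinuousMap.Homotopic.comp_left_iff_of_leftInverse (g₀ := (f i).restrict U)
      (g₁ := (f i').restrict U) h

end HomotopicDistance

theorem homDist2_comp_left_of_left_homotopy_inverse {X X' Z : Type*} [TopologicalSpace X]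
    [TopologicalSpace X'] [TopologicalSpace Z] (f f' : C(X, X')) (k : C(X', Z))
    (k' : C(Z, X')) (h : (k'.comp k).Homotopic (ContinuousMap.id X')) :
    homDist2 (k.comp f) (k.comp f') = homDist2 f f' := by
  have hcomp : ![k.comp f, k.comp f'] = fun i => k.comp (![f, f'] i) := by
    funext i
    fin_cases i <;> rfl
  rw [homDist2, hcomp, homDist_comp_left_of_leftInverse _ h, homDist2]
end

section
/- If f₁, …, f_k : X → X' are continuous maps and g₁, …, g_k : X' → Y are continuous maps with g_i homotopic to g_{i+1} for every i = 1, …, k−1, then D(g₁ ∘ f₁, …, g_k ∘ f_k) ≤ D(f₁, …, f_k). -/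
/-! Every cover on which the `f i` are pairwise homotopic also works for the `g i ∘ f i`:
homotopies compose, and the `g i` are all homotopic to each other, being linked by a chain. -/

theorem Equivalence.rel_of_forall_rel_succ_fin {α : Type*} {r : α → α → Prop}
    (hr : Equivalence r) {k : ℕ} {g : Fin k → α}
    (hg : ∀ i : Fin k, ∀ hi : i.val + 1 < k, r (g i) (g ⟨i.val + 1, hi⟩)) (i j : Fin k) :
    r (g i) (g j) := by
  wlog hij : i ≤ j generalizing i j
  · exact hr.symm (this j i (le_of_not_ge hij))
  have : Std.Refl r := ⟨hr.refl⟩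
  have : IsTrans α r := ⟨fun _ _ _ => hr.trans⟩
  let f : ℕ → α := fun n => g ⟨min n j, by omega⟩
  have hf : ∀ n, r (f n) (f (n + 1)) := by
    intro n
    rcases lt_or_ge n j with hn | hn
    · simpa [f, min_eq_left hn.le, min_eq_left (Nat.succ_le_of_lt hn)] using
        hg ⟨n, by omega⟩ (lt_of_le_of_lt hn j.isLt)
    · simpa [f, min_eq_right hn, min_eq_right (Nat.le_succ_of_le hn)] using hr.refl (g j)
  simpa [f, min_eq_left (Fin.le_def.mp hij)] using Nat.rel_of_forall_rel_succ_of_le r hf hij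

theorem homDist_le_homDist_of_forall_homotopic_imp {X Y Z : Type*} [TopologicalSpace X]
    [TopologicalSpace Y] [TopologicalSpace Z] {k l : ℕ} (f : Fin k → C(X, Y))
    (f' : Fin l → C(X, Z))
    (h : ∀ U : Set X, IsOpen U → (∀ i i', ((f i).restrict U).Homotopic ((f i').restrict U)) →
      ∀ i i', ((f' i).restrict U).Homotopic ((f' i').restrict U)) :
    homDist f' ≤ homDist f :=
  sInf_le_sInf <| Set.image_mono fun _ ⟨U, hU, hcov, hhom⟩ =>
    ⟨U, hU, hcov, fun j => h (U j) (hU j) (hhom j)⟩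

theorem homDist_comp_le_of_homotopic_chain {X X' Y : Type*} [TopologicalSpace X]
    [TopologicalSpace X'] [TopologicalSpace Y] {k : ℕ} (f : Fin k → C(X, X'))
    (g : Fin k → C(X', Y))
    (hg : ∀ i : Fin k, ∀ hi : i.val + 1 < k, (g i).Homotopic (g ⟨i.val + 1, hi⟩)) :
    homDist (fun i => (g i).comp (f i)) ≤ homDist f :=
  homDist_le_homDist_of_forall_homotopic_imp f _ fun _ _ hf i i' =>
    (ContinuousMap.Homotopic.equivalence.rel_of_forall_rel_succ_fin hg i i').comp (hf i i')
end

section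
/- Let X and X' be path-connected topological spaces. For any continuous maps f₁, …, f_k : X → X', the higher homotopic distance satisfies D(f₁, …, f_k) ≤ cat(X), where cat(X) is the Lusternik–Schnirelmann category of X. -/
/-- The Lusternik–Schnirelmann category of `X`: the least `m` such that `X` admits an open
cover by `m` sets, each of whose inclusion into `X` is nullhomotopic. -/
noncomputable def lsCat (X : Type*) [TopologicalSpace X] : ℕ∞ :=
  sInf ((fun n : ℕ => (n : ℕ∞)) '' {m : ℕ | ∃ U : Fin m → Set X,
    (∀ j, IsOpen (U j)) ∧ (⋃ j, U j) = Set.univ ∧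
    ∀ j, ∃ c : X, ((ContinuousMap.id X).restrict (U j)).Homotopic
      (ContinuousMap.const _ c)})

/-!
Every map restricted to a set whose inclusion is nullhomotopic is nullhomotopic, and any two
nullhomotopic maps into a path-connected space are homotopic. Hence every categorical cover of `X`
is also a cover on whose members all the `f i` are pairwise homotopic.
-/

namespace ContinuousMap

variable {X Y : Type*} [TopologicalSpace X] [TopologicalSpace Y]

theorem Nullhomotopic.homotopic [PathConnectedSpace Y] {f g : C(X, Y)}
    (hf : f.Nullhomotopic) (hg : g.Nullhomotopic) : f.Homotopic g := by
  obtain ⟨y, hfy⟩ := hf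
  obtain ⟨z, hgz⟩ := hg
  exact hfy.trans <| .trans ⟨(PathConnectedSpace.somePath y z).toHomotopyConst⟩ hgz.symm

theorem Nullhomotopic.restrict {U : Set X} (hU : ((ContinuousMap.id X).restrict U).Nullhomotopic)
    (f : C(X, Y)) : (f.restrict U).Nullhomotopic :=
  hU.comp_right f

end ContinuousMap

theorem homDist_le_lsCat_general {X X' : Type*} [TopologicalSpace X] [TopologicalSpace X']
    [PathConnectedSpace X'] {k : ℕ} (f : Fin k → C(X, X')) :
    homDist f ≤ lsCat X := by
  refine sInf_le_sInf <| Set.image_mono fun _ ⟨U, hopen, hcover, hnull⟩ =>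
    ⟨U, hopen, hcover, fun j i i' => ?_⟩
  have hj : ((ContinuousMap.id X).restrict (U j)).Nullhomotopic := hnull j
  exact (hj.restrict (f i)).homotopic (hj.restrict (f i'))

theorem homDist_le_lsCat {X X' : Type*} [TopologicalSpace X] [TopologicalSpace X']
    [PathConnectedSpace X] [PathConnectedSpace X'] {k : ℕ} (f : Fin k → C(X, X')) :
    homDist f ≤ lsCat X :=
  homDist_le_lsCat_general f
end

section
/- Let X × X̄' be a normal topological space. If f₁, …, f_k : X → X' and g₁, …, g_k : X̄ → X̄' are continuous maps, then the higher homotopic distance of the product maps satisfies D(f₁ × g₁, …, f_k × g_k) ≤ D(f₁, …, f_k) + D(g₁, …, g_k). -/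
open Set Function

namespace ContinuousMap.Homotopic

variable {X Y : Type*} [TopologicalSpace X] [TopologicalSpace Y]

theorem restrict_iUnion {ι : Type*} {f g : C(X, Y)} {P : ι → Set X} (hP : ∀ i, IsOpen (P i))
    (hdisj : Pairwise (Disjoint on P)) (h : ∀ i, (f.restrict (P i)).Homotopic (g.restrict (P i))) :
    (f.restrict (⋃ i, P i)).Homotopic (g.restrict (⋃ i, P i)) := by
  have H i := (h i).some
  let S (i : ι) : Set (unitInterval × ⋃ i, P i) := {p | (p.2 : X) ∈ P i}
  let toP (i : ι) : C(S i, unitInterval × P i) := ⟨fun p => (p.1.1, ⟨p.1.2, p.2⟩), by fun_prop⟩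
  have hS : ∀ i, IsOpen (S i) := fun i => (hP i).preimage (by fun_prop)
  have compat : ∀ i j p (hi : p ∈ S i) (hj : p ∈ S j),
      (H i).toContinuousMap.comp (toP i) ⟨p, hi⟩ = (H j).toContinuousMap.comp (toP j) ⟨p, hj⟩ := by
    intro i j p hi hj
    obtain rfl : i = j := by
      by_contra hij
      exact disjoint_left.1 (hdisj hij) hi hj
    rfl
  have cover : ∀ p, ∃ i, S i ∈ nhds p := fun p =>
    (mem_iUnion.1 p.2.2).imp fun i hi => (hS i).mem_nhds hi
  refine ⟨⟨liftCover S (fun i => (H i).toContinuousMap.comp (toP i)) compat cover,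
    fun x => ?_, fun x => ?_⟩⟩ <;> obtain ⟨i, hi⟩ := mem_iUnion.1 x.2
  · exact (liftCover_coe (⟨(0, x), hi⟩ : S i)).trans ((H i).apply_zero ⟨x, hi⟩)
  · exact (liftCover_coe (⟨(1, x), hi⟩ : S i)).trans ((H i).apply_one ⟨x, hi⟩)

theorem prodMap_restrict {X' Z Z' : Type*} [TopologicalSpace X'] [TopologicalSpace Z]
    [TopologicalSpace Z'] {f f' : C(X, X')} {g g' : C(Z, Z')} {U : Set X} {V : Set Z}
    {W : Set (X × Z)} (hf : (f.restrict U).Homotopic (f'.restrict U))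
    (hg : (g.restrict V).Homotopic (g'.restrict V)) (hW : W ⊆ U ×ˢ V) :
    ((f.prodMap g).restrict W).Homotopic ((f'.prodMap g').restrict W) :=
  (hf.prodMap hg).comp
    (.refl (⟨fun p => (⟨p.1.1, (hW p.2).1⟩, ⟨p.1.2, (hW p.2).2⟩), by fun_prop⟩ : C(W, U × V)))

end ContinuousMap.Homotopic

theorem NormalSpace.of_prod_left {X Z : Type*} [TopologicalSpace X] [TopologicalSpace Z]
    [NormalSpace (X × Z)] (z : Z) : NormalSpace X where
  normal s t hs ht hst := by
    obtain ⟨u, v, hu, hv, hsu, htv, huv⟩ := NormalSpace.normal (s ×ˢ (univ : Set Z)) (t ×ˢ univ)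
      (hs.prod isClosed_univ) (ht.prod isClosed_univ) (disjoint_prod.2 (Or.inl hst))
    have hz : Continuous fun x : X => (x, z) := by fun_prop
    exact ⟨_, _, hu.preimage hz, hv.preimage hz, fun x hx => hsu ⟨hx, trivial⟩,
      fun x hx => htv ⟨hx, trivial⟩, huv.preimage _⟩

theorem exists_continuous_subordinate_gt {X : Type*} [TopologicalSpace X] [NormalSpace X]
    {ι : Type*} [Finite ι] {U : ι → Set X} (hU : ∀ a, IsOpen (U a)) (hcover : ⋃ a, U a = univ)
    (c : ℝ) : ∃ φ : ι → C(X, ℝ), (∀ a x, 0 < φ a x → x ∈ U a) ∧ ∀ x, ∃ a, c < φ a x := by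
  obtain ⟨ρ, hρU⟩ := BumpCovering.exists_isSubordinate_of_locallyFinite isClosed_univ U hU
    (locallyFinite_of_finite U) hcover.ge
  refine ⟨fun a => (|c| + 1) • ρ a, fun a x hx => hρU a (subset_tsupport _ ?_), fun x => ?_⟩
  · exact right_ne_zero_of_smul (M := ℝ) (a := |c| + 1) hx.ne'
  · refine ⟨ρ.ind x trivial, ?_⟩
    rw [ContinuousMap.smul_apply, (ρ.eventuallyEq_one x trivial).eq_of_nhds, Pi.one_apply,
      smul_eq_mul, mul_one]
    exact (le_abs_self c).trans_lt (lt_add_one _)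

section Bands

variable {X : Type*} [TopologicalSpace X] {n : ℕ} (φ : Fin n → C(X, ℝ)) (m : ℕ)

def levelBands : Fin n ⊕ Fin m → Fin n × Fin m → Set X
  | .inl a, (a', b) => {x | a' = a ∧ |φ a x - ((b : ℕ) + 1)| < 1 / 2}
  | .inr b, (a, b') => {x | b' = b ∧ (b : ℕ) + 1 < φ a x ∧ ∀ a' < a, φ a' x < (b : ℕ) + 1}

variable {φ m}

theorem isOpen_levelBands (s : Fin n ⊕ Fin m) (p : Fin n × Fin m) :
    IsOpen (levelBands φ m s p) := by
  rcases s with a | b <;> obtain ⟨a', b'⟩ := p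
  · exact isOpen_const.inter (isOpen_lt (by fun_prop) continuous_const :
      IsOpen {x | |φ a x - ((b' : ℕ) + 1)| < 1 / 2})
  · refine isOpen_const.inter ((isOpen_lt continuous_const (φ a').continuous).inter ?_)
    show IsOpen {x | ∀ a < a', φ a x < ((b : ℕ) : ℝ) + 1}
    simp only [ofPred_forall]
    exact isOpen_iInter_of_finite fun a => isOpen_iInter_of_finite fun _ =>
      isOpen_lt (φ a).continuous continuous_const

theorem levelBands_subset (s : Fin n ⊕ Fin m) (p : Fin n × Fin m) :
    levelBands φ m s p ⊆ {x | 0 < φ p.1 x} := by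
  rcases s with a | b <;> obtain ⟨a', b'⟩ := p <;> rintro x ⟨rfl, hx⟩
  · have := (abs_sub_lt_iff.1 hx).2
    have : (0 : ℝ) ≤ (b' : ℕ) := Nat.cast_nonneg _
    show 0 < φ a' x
    linarith
  · exact lt_trans (by positivity) hx.1

theorem pairwise_disjoint_levelBands (s : Fin n ⊕ Fin m) :
    Pairwise (Disjoint on levelBands φ m s) := by
  rintro ⟨a₁, b₁⟩ ⟨a₂, b₂⟩ hne
  refine disjoint_left.2 fun x h₁ h₂ => hne ?_
  rcases s with a | b
  · obtain ⟨rfl, h₁⟩ := h₁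
    obtain ⟨rfl, h₂⟩ := h₂
    have := abs_sub_lt_iff.1 h₁
    have := abs_sub_lt_iff.1 h₂
    have h₁₂ : (b₁ : ℕ) < b₂ + 1 := by exact_mod_cast (by linarith : ((b₁ : ℕ) : ℝ) < b₂ + 1)
    have h₂₁ : (b₂ : ℕ) < b₁ + 1 := by exact_mod_cast (by linarith : ((b₂ : ℕ) : ℝ) < b₁ + 1)
    rw [Fin.ext (by omega : (b₁ : ℕ) = b₂)]
  · obtain ⟨rfl, h₁, h₁'⟩ := h₁
    obtain ⟨rfl, h₂, h₂'⟩ := h₂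
    rcases lt_trichotomy a₁ a₂ with h | rfl | h
    · exact absurd (h₂' a₁ h) h₁.not_gt
    · rfl
    · exact absurd (h₁' a₂ h) h₂.not_gt

theorem exists_mem_levelBands (x : X) (hx : ∃ a, (m : ℝ) < φ a x) (b : Fin m) :
    ∃ s a, x ∈ levelBands φ m s (a, b) := by
  by_cases hnear : ∃ a, |φ a x - ((b : ℕ) + 1)| < 1 / 2
  · obtain ⟨a, ha⟩ := hnear
    exact ⟨.inl a, a, rfl, ha⟩
  push Not at hnear
  have hb : ((b : ℕ) : ℝ) + 1 ≤ m := by exact_mod_cast b.isLt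
  obtain ⟨a, ha, hmin⟩ := (wellFounded_lt (α := Fin n)).has_min {a | (b : ℕ) + 1 < φ a x}
    (hx.imp fun a ha => hb.trans_lt ha)
  refine ⟨.inr b, a, rfl, ha, fun a' ha' => (not_lt.1 (hmin a' · ha')).lt_of_ne fun heq => ?_⟩
  have := hnear a'
  norm_num [heq] at this

end Bands

section HomDist

variable {X Y : Type*} [TopologicalSpace X] [TopologicalSpace Y] {k : ℕ}

def HasHomotopicCover (f : Fin k → C(X, Y)) (n : ℕ) : Prop :=
  ∃ U : Fin n → Set X, (∀ j, IsOpen (U j)) ∧ (⋃ j, U j) = univ ∧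
    ∀ j i i', ((f i).restrict (U j)).Homotopic ((f i').restrict (U j))

theorem homDist_eq_iInf (f : Fin k → C(X, Y)) :
    homDist f = ⨅ n ∈ {n | HasHomotopicCover f n}, (n : ℕ∞) :=
  sInf_image

theorem homDist_eq_zero_of_isEmpty [IsEmpty X] (f : Fin k → C(X, Y)) : homDist f = 0 := by
  have hcover : HasHomotopicCover f 0 :=
    ⟨Fin.elim0, fun j => j.elim0, (iUnion_of_empty _).trans (univ_eq_empty_iff.2 ‹_›).symm,
      fun j => j.elim0⟩
  exact nonpos_iff_eq_zero.1 (sInf_le ⟨0, hcover, rfl⟩)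

theorem homDist_le_one_of_isEmpty (f : Fin k → C(X, Y)) [IsEmpty (Fin k)] : homDist f ≤ 1 :=
  sInf_le ⟨1, ⟨fun _ => univ, fun _ => isOpen_univ, iUnion_const _, fun _ i => isEmptyElim i⟩,
    Nat.cast_one⟩

theorem one_le_homDist [Nonempty X] (f : Fin k → C(X, Y)) : 1 ≤ homDist f := by
  rw [homDist_eq_iInf]
  refine le_iInf₂ fun n ⟨U, _, hU, _⟩ => Order.one_le_iff_ne_zero.2 (Nat.cast_ne_zero.2 ?_)
  rintro rfl
  exact empty_ne_univ (iUnion_of_empty U ▸ hU)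

theorem homDist_le_add {Z W Z' W' : Type*} [TopologicalSpace Z] [TopologicalSpace W]
    [TopologicalSpace Z'] [TopologicalSpace W'] {f : Fin k → C(X, Y)} {g : Fin k → C(Z, W)}
    {h : Fin k → C(Z', W')}
    (H : ∀ n m, HasHomotopicCover f n → HasHomotopicCover g m → HasHomotopicCover h (n + m)) :
    homDist h ≤ homDist f + homDist g := by
  simp only [homDist_eq_iInf]
  exact ENat.le_iInf₂_add_iInf₂ fun n hn m hm =>
    (iInf₂_le (n + m) (H n m hn hm)).trans_eq (Nat.cast_add n m)

end HomDist

theorem HasHomotopicCover.prodMap {X X' Z Z' : Type*} [TopologicalSpace X] [TopologicalSpace X']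
    [TopologicalSpace Z] [TopologicalSpace Z'] [NormalSpace X] {k n m : ℕ}
    {f : Fin k → C(X, X')} {g : Fin k → C(Z, Z')}
    (hf : HasHomotopicCover f n) (hg : HasHomotopicCover g m) :
    HasHomotopicCover (fun i => (f i).prodMap (g i)) (n + m) := by
  obtain ⟨U, hUo, hU, hfU⟩ := hf
  obtain ⟨V, hVo, hV, hgV⟩ := hg
  obtain ⟨φ, hφU, hφ⟩ := exists_continuous_subordinate_gt hUo hU m
  let W (s : Fin n ⊕ Fin m) : Set (X × Z) := ⋃ p, levelBands φ m s p ×ˢ V p.2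
  refine ⟨fun j => W (finSumFinEquiv.symm j), fun j => ?_, ?_, fun j i i' => ?_⟩
  · exact isOpen_iUnion fun p => (isOpen_levelBands _ p).prod (hVo p.2)
  · rw [finSumFinEquiv.symm.surjective.iUnion_comp W, eq_univ_iff_forall]
    rintro ⟨x, z⟩
    obtain ⟨b, hb⟩ := mem_iUnion.1 (hV ▸ mem_univ z)
    obtain ⟨s, a, hx⟩ := exists_mem_levelBands x (hφ x) b
    exact mem_iUnion.2 ⟨s, mem_iUnion.2 ⟨(a, b), hx, hb⟩⟩
  · refine ContinuousMap.Homotopic.restrict_iUnion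
      (fun p => (isOpen_levelBands _ p).prod (hVo p.2))
      (fun p q hpq => disjoint_prod.2 (.inl (pairwise_disjoint_levelBands _ hpq))) fun p => ?_
    exact (hfU p.1 i i').prodMap_restrict (hgV p.2 i i')
      (prod_mono (fun x hx => hφU _ _ (levelBands_subset _ p hx)) subset_rfl)

theorem homDist_prodMap_le {X X' Xb Xb' : Type*} [TopologicalSpace X] [TopologicalSpace X']
    [TopologicalSpace Xb] [TopologicalSpace Xb'] [NormalSpace (X × Xb')] {k : ℕ}
    (f : Fin k → C(X, X')) (g : Fin k → C(Xb, Xb')) :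
    homDist (fun i => (f i).prodMap (g i)) ≤ homDist f + homDist g := by
  rcases isEmpty_or_nonempty (X × Xb) with _ | ⟨⟨x, xb⟩⟩
  · exact (homDist_eq_zero_of_isEmpty _).trans_le zero_le
  rcases isEmpty_or_nonempty Xb' with hXb' | ⟨⟨xb'⟩⟩
  · have : Nonempty X := ⟨x⟩
    have : IsEmpty (Fin k) := ⟨fun i => hXb'.false (g i xb)⟩
    calc homDist _ ≤ 1 := homDist_le_one_of_isEmpty _
      _ ≤ homDist f := one_le_homDist f
      _ ≤ homDist f + homDist g := le_self_add
  have : NormalSpace X := .of_prod_left xb'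
  exact homDist_le_add fun n m hf hg => hf.prodMap hg
end

section
/- For a surjective fibration f : X → Yⁿ and any n ≥ 1, the higher topological complexity satisfies TC_n(f) ≤ TC_{n+1}(f). -/
universe u

/-- A continuous map is a fibration if it has the homotopy lifting property with respect
to all spaces (in universe `u`). -/
def IsFibration {X Y : Type*} [TopologicalSpace X] [TopologicalSpace Y]
    (f : C(X, Y)) : Prop :=
  ∀ (Z : Type u) [TopologicalSpace Z] (g : C(Z, X)) (G : C(Z × unitInterval, Y)),
    (∀ z, G (z, 0) = f (g z)) →
    ∃ G' : C(Z × unitInterval, X),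
      (∀ p, f (G' p) = G p) ∧ ∀ z, G' (z, 0) = g z

/-- The Schwarz genus of a map `p : E → B`: the least number of open sets covering `B`
over each of which `p` admits a continuous local section. -/
noncomputable def secat {E B : Type*} [TopologicalSpace E] [TopologicalSpace B]
    (p : C(E, B)) : ℕ∞ :=
  sInf ((fun n : ℕ => (n : ℕ∞)) '' {n : ℕ | ∃ U : Fin n → Set B,
    (∀ j, IsOpen (U j)) ∧ (⋃ j, U j) = Set.univ ∧
    ∀ j, ∃ s : C(U j, E), ∀ x : U j, p (s x) = (x : B)})

/-- The fibration `π_g : X^I → X × Y`, `β ↦ (β 0, g (β 1))`, associated to `g : X → Y`. -/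
noncomputable def piMap {X Y : Type*} [TopologicalSpace X] [TopologicalSpace Y]
    (g : C(X, Y)) : C(C(unitInterval, X), X × Y) :=
  ⟨fun β => (β 0, g (β 1)),
    (continuous_eval_const 0).prodMk
      (g.continuous.comp (continuous_eval_const 1))⟩

/-- The topological complexity of a map `g : X → Y`, as the Schwarz genus of `π_g`. -/
noncomputable def TCmap {X Y : Type*} [TopologicalSpace X] [TopologicalSpace Y]
    (g : C(X, Y)) : ℕ∞ :=
  secat (piMap g)

/-- Projection `pᵢ : Xⁿ → X` as a continuous map. -/
def projC {X : Type*} [TopologicalSpace X] {n : ℕ} (i : Fin n) : C((Fin n → X), X) :=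
  ⟨fun x => x i, continuous_apply i⟩


section HomotopicDistance

variable {X Y Z : Type*} [TopologicalSpace X] [TopologicalSpace Y] [TopologicalSpace Z]

theorem homDist_comp_le {k : ℕ} (f : Fin k → C(Y, Z)) (g : C(X, Y)) :
    homDist (fun i => (f i).comp g) ≤ homDist f := by
  refine sInf_le_sInf (Set.image_mono ?_)
  rintro m ⟨U, hUo, hUc, hUh⟩
  refine ⟨fun j => g ⁻¹' U j, fun j => (hUo j).preimage g.continuous, ?_, fun j i i' => ?_⟩
  · rw [← Set.preimage_iUnion, hUc, Set.preimage_univ]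
  · exact (hUh j i i').comp (ContinuousMap.Homotopic.refl (g.restrictPreimage (U j)))

theorem homDist_comp_index_le {k l : ℕ} (f : Fin l → C(X, Y)) (σ : Fin k → Fin l) :
    homDist (f ∘ σ) ≤ homDist f :=
  sInf_le_sInf <| Set.image_mono fun _ ⟨U, hUo, hUc, hUh⟩ =>
    ⟨U, hUo, hUc, fun j i i' => hUh j (σ i) (σ i')⟩

end HomotopicDistance

theorem TCn_le_TCn_succ_general {X Y : Type*} [TopologicalSpace X] [TopologicalSpace Y]
    {n : ℕ} (hn : 1 ≤ n) (f : C(X, Fin n → Y)) :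
    homDist (fun i : Fin n => f.comp (projC i)) ≤
      homDist (fun i : Fin (n + 1) => f.comp (projC i)) := by
  let r : Fin (n + 1) → Fin n := Fin.predAbove ⟨n - 1, by omega⟩
  have hr : ∀ i : Fin n, r i.castSucc = i := fun i =>
    Fin.predAbove_castSucc_of_le _ _ (Fin.le_def.2 (by simp only; omega))
  let q : C(Fin n → X, Fin (n + 1) → X) := ⟨fun x => x ∘ r, by fun_prop⟩
  have hfactor : (fun i : Fin n => f.comp (projC i)) =
      fun i => (f.comp (projC i.castSucc)).comp q := by
    ext i x
    simp [q, projC, hr]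
  rw [hfactor]
  exact (homDist_comp_le _ q).trans (homDist_comp_index_le _ Fin.castSucc)

theorem TCn_le_TCn_succ {X Y : Type*} [TopologicalSpace X] [TopologicalSpace Y]
    {n : ℕ} (hn : 1 ≤ n) (f : C(X, Fin n → Y)) (hsurj : Function.Surjective f)
    (hf : IsFibration.{u} f) :
    homDist (fun i : Fin n => f.comp (projC i)) ≤
      homDist (fun i : Fin (n + 1) => f.comp (projC i)) :=
  TCn_le_TCn_succ_general hn f
end
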